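/- arXiv:2004.12801 — 4 statements merged into one kernel-verified Lean document; each statement's English description precedes it below -/
import Mathlib

section
/- There exists a finite set S of 142 cells in ℤ² such that S is connected under edge-adjacency (cells (a,b) and (c,d) are adjacent iff |a-c|+|b-d|=1) and no four cells of S are equally spaced on a straight line (i.e., there are no p ∈ ℤ² and nonzero v ∈ ℤ² with p, p+v, p+2v, p+3v all in S). -/
/-! The witness is an explicit 142-cell polyomino, checked by kernel computation. Connectivity is
certified by listing the cells so that each is adjacent to a later one (a spanning tree). Since
`p, p + v, p + 2v, p + 3v` are determined by `p` and `q = p + v`, admissibility reduces to checking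
that no two distinct cells `p, q` have both `2q - p` and `3q - 2p` in the set. -/

open scoped Classical

/-- Two cells of `ℤ²` are adjacent iff they differ by a unit vector. -/
def Adj (p q : ℤ × ℤ) : Prop :=
  (p.1 - q.1).natAbs + (p.2 - q.2).natAbs = 1

/-- A finite set of cells is connected under edge-adjacency. -/
def ConnectedIn (S : Finset (ℤ × ℤ)) : Prop :=
  ∀ p ∈ S, ∀ q ∈ S,
    Relation.ReflTransGen (fun a b => a ∈ S ∧ b ∈ S ∧ Adj a b) p q

/-- A polyomino: a finite nonempty edge-connected subset of `ℤ²`. -/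
def IsPolyomino (S : Finset (ℤ × ℤ)) : Prop :=
  S.Nonempty ∧ ConnectedIn S

/-- Admissible: no four cells equally spaced on a straight line. -/
def Admissible (S : Finset (ℤ × ℤ)) : Prop :=
  ¬ ∃ (p v : ℤ × ℤ), v ≠ 0 ∧ p ∈ S ∧ p + v ∈ S ∧
      p + (2 : ℤ) • v ∈ S ∧ p + (3 : ℤ) • v ∈ S

/-- Degree of a cell in the adjacency graph restricted to `S`. -/
noncomputable def degIn (S : Finset (ℤ × ℤ)) (p : ℤ × ℤ) : ℕ :=
  (S.filter fun q => Adj p q).card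

/-- A path polyomino: either a single cell, or a connected set where every cell
has degree at most 2 and exactly two cells have degree 1. -/
def IsPathPoly (S : Finset (ℤ × ℤ)) : Prop :=
  IsPolyomino S ∧
    (S.card = 1 ∨
      ((∀ p ∈ S, degIn S p ≤ 2) ∧ (S.filter fun p => degIn S p = 1).card = 2))

/-- A loop: a polyomino all of whose cells have degree exactly 2. -/
def IsLoop (S : Finset (ℤ × ℤ)) : Prop :=
  IsPolyomino S ∧ ∀ p ∈ S, degIn S p = 2

/-- Graph distance within `S` (shortest walk staying in `S`). -/
noncomputable def distIn (S : Finset (ℤ × ℤ)) (p q : ℤ × ℤ) : ℕ :=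
  sInf {n | ∃ f : ℕ → ℤ × ℤ, f 0 = p ∧ f n = q ∧ (∀ i ≤ n, f i ∈ S) ∧
    ∀ i < n, Adj (f i) (f (i + 1))}

/-- Graph diameter of `S`. -/
noncomputable def diamIn (S : Finset (ℤ × ℤ)) : ℕ :=
  sSup {d | ∃ p ∈ S, ∃ q ∈ S, distIn S p q = d}

/-- Isometries of the square lattice: bijections of `ℤ²` preserving squared
Euclidean distance (compositions of translations, 90° rotations, reflections). -/
def IsLatticeIso (f : ℤ × ℤ → ℤ × ℤ) : Prop :=
  Function.Bijective f ∧ ∀ p q : ℤ × ℤ,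
    ((f p).1 - (f q).1) ^ 2 + ((f p).2 - (f q).2) ^ 2 =
      (p.1 - q.1) ^ 2 + (p.2 - q.2) ^ 2

/-- Two finite cell sets are equivalent up to a lattice isometry. -/
def IsoEquiv (S T : Finset (ℤ × ℤ)) : Prop :=
  ∃ f, IsLatticeIso f ∧ S.image f = T

open Relation Encodable

-- Needed by `decide`: under `open scoped Classical`, `Adj` would otherwise get the
-- noncomputable instance `Classical.propDecidable`.
instance : DecidableRel Adj := fun _ _ => inferInstanceAs (Decidable (_ = 1))

theorem Adj.symm {p q : ℤ × ℤ} (h : Adj p q) : Adj q p := by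
  unfold Adj at *; omega

theorem admissible_iff {S : Finset (ℤ × ℤ)} : Admissible S ↔
    ∀ p ∈ S, ∀ q ∈ S, (2 : ℤ) • q - p ∈ S → (3 : ℤ) • q - (2 : ℤ) • p ∈ S → q = p := by
  have two (p v : ℤ × ℤ) : (2 : ℤ) • (p + v) - p = p + (2 : ℤ) • v := by module
  have three (p v : ℤ × ℤ) : (3 : ℤ) • (p + v) - (2 : ℤ) • p = p + (3 : ℤ) • v := by module
  constructor
  · intro hS p hp q hq h2 h3
    obtain ⟨v, rfl⟩ : ∃ v, q = p + v := ⟨q - p, by abel⟩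
    by_contra hv
    exact hS ⟨p, v, by simpa using hv, hp, hq, two p v ▸ h2, three p v ▸ h3⟩
  · rintro hS ⟨p, v, hv, hp, h1, h2, h3⟩
    exact hv (by simpa using hS p hp (p + v) h1 (two p v ▸ h2) (three p v ▸ h3))

section LinksForward

variable {α : Type*} {r : α → α → Prop}

/-- Certifies that `l` spans a connected subgraph: the forward links form a spanning tree rooted at
the last entry. -/
def LinksForward (r : α → α → Prop) : List α → Prop
  | [] | [_] => True
  | a :: l => (∃ b ∈ l, r a b) ∧ LinksForward r l

instance LinksForward.decidable [DecidableRel r] : ∀ l, Decidable (LinksForward r l)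
  | [] | [_] => .isTrue trivial
  | _ :: b :: l =>
    @instDecidableAnd _ _ (List.decidableBEx _ _) (LinksForward.decidable (b :: l))

theorem LinksForward.reflTransGen_getLast {l : List α} (hl : LinksForward r l) (hne : l ≠ [])
    {a : α} (ha : a ∈ l) : ReflTransGen (fun x y => x ∈ l ∧ y ∈ l ∧ r x y) a (l.getLast hne) := by
  induction l generalizing a with
  | nil => exact absurd rfl hne
  | cons b l ih =>
    cases l with
    | nil =>
      obtain rfl : a = b := List.mem_singleton.mp ha
      exact .refl
    | cons c l =>
      obtain ⟨⟨d, hd, hbd⟩, hl⟩ := hl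
      have to_last {x : α} (hx : x ∈ c :: l) : ReflTransGen (fun x y => x ∈ b :: c :: l ∧
          y ∈ b :: c :: l ∧ r x y) x ((c :: l).getLast (List.cons_ne_nil _ _)) :=
        ReflTransGen.mono (fun _ _ h => ⟨List.mem_cons_of_mem b h.1, List.mem_cons_of_mem b h.2.1,
          h.2.2⟩) _ _ (ih hl (List.cons_ne_nil _ _) hx)
      rw [List.getLast_cons (List.cons_ne_nil _ _)]
      rcases List.mem_cons.mp ha with rfl | ha
      · exact .head ⟨List.mem_cons_self, List.mem_cons_of_mem _ hd, hbd⟩ (to_last hd)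
      · exact to_last ha

end LinksForward

-- Bit `encode a` is set for each entry `a`: membership becomes a single bit lookup that the
-- kernel evaluates on binary numerals.
def bitMask {α : Type*} [Encodable α] (l : List α) : ℕ :=
  l.foldr (fun a m => m ||| 1 <<< encode a) 0

theorem testBit_bitMask {α : Type*} [Encodable α] {l : List α} {a : α} (ha : a ∈ l) :
    (bitMask l).testBit (encode a) = true := by
  induction l with
  | nil => cases ha
  | cons b l ih =>
    simp only [bitMask, List.foldr_cons, Nat.testBit_or, Nat.one_shiftLeft] at *
    rcases List.mem_cons.mp ha with rfl | ha
    · simp [Nat.testBit_two_pow_self]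
    · simp [ih ha]

theorem connectedIn_toFinset {l : List (ℤ × ℤ)} (hl : LinksForward Adj l) :
    ConnectedIn l.toFinset := by
  intro p hp q hq
  have hne : l ≠ [] := List.ne_nil_of_mem (List.mem_toFinset.mp hp)
  let R (a b : ℤ × ℤ) : Prop := a ∈ l.toFinset ∧ b ∈ l.toFinset ∧ Adj a b
  have : Std.Symm R := ⟨fun _ _ h => ⟨h.2.1, h.1, h.2.2.symm⟩⟩
  have to_last {x : ℤ × ℤ} (hx : x ∈ l.toFinset) : ReflTransGen R x (l.getLast hne) :=
    ReflTransGen.mono (fun _ _ h => by simpa [R] using h) _ _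
      (hl.reflTransGen_getLast hne (List.mem_toFinset.mp hx))
  exact (to_last hp).trans (Std.Symm.symm _ _ (to_last hq))

theorem admissible_toFinset_of_testBit {l : List (ℤ × ℤ)}
    (h : ∀ p ∈ l, ∀ q ∈ l, (bitMask l).testBit (encode ((2 : ℤ) • q - p)) →
      (bitMask l).testBit (encode ((3 : ℤ) • q - (2 : ℤ) • p)) → q = p) :
    Admissible l.toFinset := by
  refine admissible_iff.mpr fun p hp q hq h2 h3 => ?_
  simp only [List.mem_toFinset] at hp hq h2 h3
  exact h p hp q hq (testBit_bitMask h2) (testBit_bitMask h3)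

def cells142 : List (ℤ × ℤ) :=
  [(-15, 0), (-15, 1), (-20, 4), (-15, 2), (-19, 4), (-16, 2), (-19, 3), (-17, 2), (-18, 3),
   (-17, 3), (-17, 4), (-16, 4), (-16, 5), (-15, 5), (-14, 5), (-14, 4), (-13, 4), (-12, 4),
   (-12, 5), (-12, 7), (-11, 5), (-11, 7), (-11, 6), (-10, 6), (-9, 4), (-9, 6), (-9, 5),
   (-8, 5), (-7, 5), (-7, 4), (-7, 3), (-8, 3), (-9, 2), (-8, 2), (-8, 1), (-6, 2),
   (-7, 1), (-6, 1), (-6, 0), (-4, -1), (-5, 0), (-4, 0), (-4, 1), (-3, 1), (-3, 2),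
   (-2, 2), (-1, 2), (0, 0), (-1, 1), (0, 1), (1, 1), (1, 2), (2, 2), (2, 3),
   (2, 4), (1, 4), (1, 5), (1, 6), (2, 6), (2, 7), (4, 7), (3, 7), (3, 8),
   (1, 9), (3, 9), (2, 9), (2, 10), (1, 12), (2, 11), (1, 11), (0, 11), (-1, 9),
   (0, 10), (-1, 10), (-2, 10), (-2, 11), (-1, 12), (-2, 12), (-3, 12), (-3, 13), (-4, 14),
   (-3, 14), (-2, 14), (-2, 15), (-1, 15), (-1, 16), (-1, 17), (-2, 17), (-2, 18), (-2, 19),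
   (-1, 19), (0, 21), (-1, 20), (0, 20), (1, 20), (1, 19), (2, 19), (3, 19), (3, 20),
   (4, 20), (4, 22), (4, 21), (5, 21), (6, 19), (6, 21), (6, 20), (7, 20), (8, 20),
   (9, 19), (8, 19), (8, 18), (7, 18), (7, 17), (7, 16), (9, 17), (8, 16), (9, 16),
   (12, 14), (9, 15), (11, 14), (10, 15), (11, 15), (11, 16), (12, 16), (12, 17), (13, 17),
   (14, 17), (14, 16), (15, 16), (16, 16), (16, 17), (19, 18), (17, 17), (18, 18), (17, 18),
   (17, 19), (16, 19), (13, 20), (15, 19), (14, 20), (15, 20), (15, 21)]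

theorem exists_admissible_polyomino_card_142 :
    ∃ S : Finset (ℤ × ℤ), IsPolyomino S ∧ Admissible S ∧ S.card = 142 := by
  refine ⟨cells142.toFinset, ⟨?_, ?_⟩, ?_, ?_⟩
  · exact List.toFinset_nonempty_iff _ |>.mpr (by simp [cells142])
  · exact connectedIn_toFinset (by decide +kernel)
  · exact admissible_toFinset_of_testBit (by decide +kernel)
  · decide +kernel
end

section
/- There exists an admissible path polyomino with exactly 120 cells. -/
open scoped Classical

/-! The witness is an explicit self-avoiding lattice path of 120 cells, and every property is a
finite computation checked by the kernel. For admissibility it suffices to rule out, for each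
ordered pair of distinct cells `p, q`, that both `2q - p` and `3q - 2p` are cells; these membership
tests are run against a bitboard of the cells, since `Nat` bit operations are cheap in the kernel
while searching a list of integer pairs is not. -/

instance inst_s3 : DecidableRel Adj := fun _ _ => inferInstanceAs (Decidable (_ = 1))

theorem adj_comm {p q : ℤ × ℤ} : Adj p q ↔ Adj q p := by
  unfold Adj; omega

theorem connectedIn_toFinset_of_isChain {L : List (ℤ × ℤ)} (hL : L.IsChain Adj) :
    ConnectedIn L.toFinset := by
  set R := fun a b => a ∈ L.toFinset ∧ b ∈ L.toFinset ∧ Adj a b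
  have : Std.Symm R := ⟨fun _ _ ⟨ha, hb, h⟩ => ⟨hb, ha, adj_comm.1 h⟩⟩
  intro p hp q hq
  rw [List.mem_toFinset] at hp hq
  have hne : L ≠ [] := List.ne_nil_of_mem hp
  have hR : L.IsChain R := hL.imp_of_mem_imp fun a b ha hb h =>
    ⟨List.mem_toFinset.2 ha, List.mem_toFinset.2 hb, h⟩
  have reach : ∀ x ∈ L, Relation.ReflTransGen R (L.head hne) x :=
    hR.induction _ _ (fun _ _ hxy hx => hx.tail hxy) fun _ => .refl
  exact (Std.Symm.symm _ _ (reach p hp)).trans (reach q hq)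

theorem card_filter_toFinset {α : Type*} [DecidableEq α] {L : List α} (hL : L.Nodup)
    (P : α → Prop) [DecidablePred P] : (L.toFinset.filter P).card = L.countP (P ·) := by
  rw [List.countP_eq_length_filter, ← List.toFinset_card_of_nodup (hL.filter _),
    List.toFinset_filter]
  simp only [decide_eq_true_eq]

theorem degIn_toFinset {L : List (ℤ × ℤ)} (hL : L.Nodup) (p : ℤ × ℤ) :
    degIn L.toFinset p = L.countP (Adj p ·) := by
  rw [degIn, ← card_filter_toFinset hL]
  congr 1
  exact Finset.filter_congr_decidable _ _ _

theorem isPathPoly_toFinset {L : List (ℤ × ℤ)} (hne : L ≠ []) (hnd : L.Nodup)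
    (hch : L.IsChain Adj) (hdeg : ∀ p ∈ L, L.countP (Adj p ·) ≤ 2)
    (hends : L.countP (fun p => L.countP (Adj p ·) = 1) = 2) : IsPathPoly L.toFinset := by
  refine ⟨⟨List.toFinset_nonempty_iff _ |>.2 hne, connectedIn_toFinset_of_isChain hch⟩,
    .inr ⟨fun p hp => ?_, ?_⟩⟩
  · rw [degIn_toFinset hnd]
    exact hdeg p (List.mem_toFinset.1 hp)
  · simp_rw [degIn_toFinset hnd]
    rw [card_filter_toFinset hnd]
    exact hends

theorem admissible_of_forall_mem {S : Finset (ℤ × ℤ)}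
    (h : ∀ p ∈ S, ∀ q ∈ S, q ≠ p → 2 • q - p ∉ S ∨ 3 • q - 2 • p ∉ S) : Admissible S := by
  rintro ⟨p, v, hv, hp, h1, h2, h3⟩
  have hq : p + v ≠ p := by simpa using hv
  rcases h p hp (p + v) h1 hq with h | h
  · exact h (by convert h2 using 1; module)
  · exact h (by convert h3 using 1; module)

def cellMask {α : Type*} (code : α → ℕ) (L : List α) : ℕ :=
  L.foldr (fun p m => 2 ^ code p ||| m) 0

theorem testBit_cellMask_of_mem {α : Type*} {code : α → ℕ} {L : List α} {p : α} (hp : p ∈ L) :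
    (cellMask code L).testBit (code p) := by
  induction L with
  | nil => simp at hp
  | cons a L ih =>
    rw [cellMask, List.foldr_cons, Nat.testBit_or, Bool.or_eq_true]
    rcases List.mem_cons.1 hp with rfl | hp
    · exact .inl Nat.testBit_two_pow_self
    · exact .inr (ih hp)

/-- Sound for every `code`: a collision of codes can only make the check fail. -/
def admissibleCheck (code : ℤ × ℤ → ℕ) (L : List (ℤ × ℤ)) : Bool :=
  let m := cellMask code L
  L.all fun p => L.all fun q =>
    q == p || !(m.testBit (code (2 • q - p)) && m.testBit (code (3 • q - 2 • p)))

theorem admissible_toFinset_of_admissibleCheck {code : ℤ × ℤ → ℕ} {L : List (ℤ × ℤ)}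
    (h : admissibleCheck code L) : Admissible L.toFinset := by
  refine admissible_of_forall_mem fun p hp q hq hqp => ?_
  simp only [List.mem_toFinset] at *
  simp only [admissibleCheck, List.all_eq_true] at h
  by_contra! hc
  have := h p hp q hq
  rw [testBit_cellMask_of_mem hc.1, testBit_cellMask_of_mem hc.2] at this
  simp [hqp] at this

def path120 : List (ℤ × ℤ) :=
  [(0, 0), (-1, 0), (-2, 0), (-2, -1), (-2, -2), (-3, -2), (-3, -3), (-3, -4), (-2, -4), (-2, -5),
    (-1, -5), (-1, -6), (-1, -7), (-2, -7), (-2, -8), (-2, -9), (-1, -9), (-1, -10), (0, -10),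
    (0, -11), (0, -12), (-1, -12), (-1, -13), (-1, -14), (-2, -14), (-3, -14), (-3, -13), (-4, -13),
    (-5, -13), (-5, -14), (-5, -15), (-6, -15), (-6, -16), (-6, -17), (-5, -17), (-5, -18),
    (-4, -18), (-4, -19), (-4, -20), (-5, -20), (-5, -21), (-5, -22), (-4, -22), (-4, -23),
    (-3, -23), (-2, -23), (-2, -22), (-1, -22), (0, -22), (0, -23), (1, -23), (1, -24), (2, -24),
    (3, -24), (3, -23), (4, -23), (5, -23), (5, -22), (5, -21), (4, -21), (4, -20), (3, -20),
    (3, -19), (3, -18), (4, -18), (5, -18), (5, -17), (6, -17), (7, -17), (7, -18), (8, -18),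
    (8, -19), (9, -19), (10, -19), (10, -18), (11, -18), (12, -18), (12, -19), (13, -19), (13, -20),
    (13, -21), (12, -21), (12, -22), (12, -23), (13, -23), (13, -24), (14, -24), (14, -25),
    (14, -26), (13, -26), (13, -27), (13, -28), (12, -28), (11, -28), (11, -27), (10, -27),
    (9, -27), (9, -28), (9, -29), (8, -29), (8, -30), (8, -31), (9, -31), (9, -32), (10, -32),
    (10, -33), (10, -34), (9, -34), (9, -35), (9, -36), (10, -36), (10, -37), (11, -37), (11, -38),
    (11, -39), (10, -39), (10, -40), (10, -41), (11, -41), (11, -42)]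

theorem exists_admissible_path_card_120 :
    ∃ S : Finset (ℤ × ℤ), IsPathPoly S ∧ Admissible S ∧ S.card = 120 := by
  have hnd : path120.Nodup := by decide +kernel
  refine ⟨path120.toFinset, ?_, ?_, ?_⟩
  · refine isPathPoly_toFinset (by decide) hnd (by decide +kernel) ?_ ?_ <;> decide +kernel
  · exact admissible_toFinset_of_admissibleCheck (code := Encodable.encode) (by decide +kernel)
  · rw [List.toFinset_card_of_nodup hnd]
    rfl
end

section
/- Any binary sequence over the alphabet {E, N} in which no three consecutive blocks of equal length are permutations of each other (i.e., there is no position i and length k ≥ 1 such that the multisets of symbols in positions [i, i+k), [i+k, i+2k), [i+2k, i+3k) are all equal) has bounded finite length; in particular, such sequences cannot be arbitrarily long. -/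
open scoped Classical

/-- Position after `i` steps of the staircase word `w` (`true` = E = (1,0),
`false` = N = (0,1)), starting at the origin. -/
def stairPos (w : List Bool) (i : ℕ) : ℤ × ℤ :=
  (((w.take i).count true : ℤ), ((w.take i).count false : ℤ))

/-- The set of cells of the monotone staircase path of the word `w`. -/
noncomputable def stairCells (w : List Bool) : Finset (ℤ × ℤ) :=
  (Finset.range (w.length + 1)).image (stairPos w)

/-- `w` contains three consecutive equal-length blocks that are permutations of
each other (an "abelian cube"). -/
def HasAbelianCube (w : List Bool) : Prop :=
  ∃ i k : ℕ, 1 ≤ k ∧ i + 3 * k ≤ w.length ∧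
    ((w.drop i).take k).count true = ((w.drop (i + k)).take k).count true ∧
    ((w.drop (i + k)).take k).count true = ((w.drop (i + 2 * k)).take k).count true


/-- Boolean check for an abelian cube. -/
def cubeB (w : List Bool) : Bool :=
  (List.range (w.length + 1)).any fun i =>
    (List.range (w.length + 1)).any fun k =>
      decide (1 ≤ k) && decide (i + 3 * k ≤ w.length) &&
      (((w.drop i).take k).count true == ((w.drop (i + k)).take k).count true) &&
      (((w.drop (i + k)).take k).count true == ((w.drop (i + 2 * k)).take k).count true)

lemma cubeB_spec {w : List Bool} (h : cubeB w = true) : HasAbelianCube w := by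
  simp only [cubeB, List.any_eq_true, List.mem_range, Bool.and_eq_true, decide_eq_true_eq,
    beq_iff_eq] at h
  obtain ⟨i, _, k, _, ⟨⟨h1, h2⟩, h3⟩, h4⟩ := h
  exact ⟨i, k, h1, h2, h3, h4⟩

set_option maxRecDepth 4000 in
lemma cube10 : ∀ a b c d e f g h i j : Bool,
    cubeB [a, b, c, d, e, f, g, h, i, j] = true := by decide

lemma cube_of_len10 (l : List Bool) (hl : l.length = 10) : cubeB l = true := by
  rcases l with _ | ⟨a, l⟩; · simp only [List.length_nil] at hl; omega
  rcases l with _ | ⟨b, l⟩; · simp only [List.length_cons, List.length_nil] at hl; omega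
  rcases l with _ | ⟨c, l⟩; · simp only [List.length_cons, List.length_nil] at hl; omega
  rcases l with _ | ⟨d, l⟩; · simp only [List.length_cons, List.length_nil] at hl; omega
  rcases l with _ | ⟨e, l⟩; · simp only [List.length_cons, List.length_nil] at hl; omega
  rcases l with _ | ⟨f, l⟩; · simp only [List.length_cons, List.length_nil] at hl; omega
  rcases l with _ | ⟨g, l⟩; · simp only [List.length_cons, List.length_nil] at hl; omega
  rcases l with _ | ⟨h, l⟩; · simp only [List.length_cons, List.length_nil] at hl; omega
  rcases l with _ | ⟨i, l⟩; · simp only [List.length_cons, List.length_nil] at hl; omega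
  rcases l with _ | ⟨j, l⟩; · simp only [List.length_cons, List.length_nil] at hl; omega
  rcases l with _ | ⟨x, l⟩
  · exact cube10 a b c d e f g h i j
  · simp only [List.length_cons] at hl; omega

lemma cube_take {w : List Bool} {m : ℕ} (h : HasAbelianCube (w.take m)) :
    HasAbelianCube w := by
  obtain ⟨i, k, h1, h2, h3, h4⟩ := h
  have hm : (w.take m).length = min m w.length := by simp
  have hlen : i + 3 * k ≤ w.length := le_trans h2 (by rw [hm]; exact min_le_right _ _)
  have hmm : i + 3 * k ≤ m := le_trans h2 (by rw [hm]; exact min_le_left _ _)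
  have key : ∀ j : ℕ, j + k ≤ m → ((w.take m).drop j).take k = (w.drop j).take k := by
    intro j hj
    rw [List.drop_take, List.take_take, min_eq_left (by omega)]
  rw [key i (by omega), key (i + k) (by omega)] at h3
  rw [key (i + k) (by omega), key (i + 2 * k) (by omega)] at h4
  exact ⟨i, k, h1, hlen, h3, h4⟩

theorem abelianCubeFree_words_bounded :
    ∃ N : ℕ, ∀ w : List Bool, ¬ HasAbelianCube w → w.length ≤ N := by
  refine ⟨9, fun w hw => ?_⟩
  by_contra hlen
  push_neg at hlen
  apply hw
  apply cube_take (m := 10)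
  apply cubeB_spec
  exact cube_of_len10 (w.take 10) (by simp; omega)
end

section
/- A monotone staircase path polyomino (a sequence of cells starting at the origin where each successive cell is obtained by moving one step East or one step North) is admissible (contains no four cells equally spaced on a line) if and only if the corresponding sequence of moves in {E, N} contains no three consecutive blocks of equal length that are permutations of each other. -/
open scoped Classical

/-!
Since every step of a staircase moves up one antidiagonal, the `m`-th cell is the unique cell
of the path on the antidiagonal `x + y = m`. Four equally spaced cells `p + j • v` therefore
sit at equally spaced positions `m + j * k` (with `k = ±(v.1 + v.2)`), and the displacement
between consecutive ones, `v`, is the vector of letter counts of the block of length `k`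
between them. Conversely the three blocks of an abelian cube have equal count vectors, so
their endpoints are four equally spaced cells.
-/

namespace Staircase

variable {w : List Bool}

theorem stairPos_add (i k : ℕ) :
    stairPos w (i + k) = stairPos w i + stairPos (w.drop i) k := by
  simp [stairPos, List.take_add, List.count_append]

theorem stairPos_fst_add_snd {i : ℕ} (h : i ≤ w.length) :
    (stairPos w i).1 + (stairPos w i).2 = i := by
  have := List.count_true_add_count_false (w.take i)
  simp only [stairPos, List.length_take, min_eq_left h] at this ⊢
  omega

theorem stairPos_eq_iff_count_true_eq {u u' : List Bool} {k : ℕ} (hu : k ≤ u.length)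
    (hu' : k ≤ u'.length) :
    stairPos u k = stairPos u' k ↔ (u.take k).count true = (u'.take k).count true := by
  have h := stairPos_fst_add_snd hu
  have h' := stairPos_fst_add_snd hu'
  simp only [stairPos, Prod.ext_iff] at h h' ⊢
  omega

theorem mem_stairCells {q : ℤ × ℤ} :
    q ∈ stairCells w ↔ ∃ m ≤ w.length, stairPos w m = q := by
  simp [stairCells]

theorem stairPos_mem_stairCells {m : ℕ} (h : m ≤ w.length) : stairPos w m ∈ stairCells w :=
  mem_stairCells.2 ⟨m, h, rfl⟩

theorem eq_of_mem_stairCells_of_fst_add_snd_eq {q q' : ℤ × ℤ} (hq : q ∈ stairCells w)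
    (hq' : q' ∈ stairCells w) (h : q.1 + q.2 = q'.1 + q'.2) : q = q' := by
  obtain ⟨m, hm, rfl⟩ := mem_stairCells.1 hq
  obtain ⟨m', hm', rfl⟩ := mem_stairCells.1 hq'
  rw [stairPos_fst_add_snd hm, stairPos_fst_add_snd hm', Nat.cast_inj] at h
  rw [h]

theorem hasAbelianCube_iff_stairPos_drop :
    HasAbelianCube w ↔ ∃ i k, 1 ≤ k ∧ i + 3 * k ≤ w.length ∧
      stairPos (w.drop i) k = stairPos (w.drop (i + k)) k ∧
      stairPos (w.drop (i + k)) k = stairPos (w.drop (i + k + k)) k := by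
  refine exists₂_congr fun i k => and_congr_right fun _ => and_congr_right fun h => ?_
  rw [two_mul, ← add_assoc, stairPos_eq_iff_count_true_eq, stairPos_eq_iff_count_true_eq] <;>
    simp <;> omega

theorem stairPos_drop_eq_of_eq_add {i k : ℕ} {v : ℤ × ℤ}
    (h : stairPos w (i + k) = stairPos w i + v) : stairPos (w.drop i) k = v := by
  rw [stairPos_add] at h
  exact add_left_cancel h

theorem hasAbelianCube_of_mem_stairCells {p v : ℤ × ℤ} (hv : 0 < v.1 + v.2)
    (h0 : p ∈ stairCells w) (h1 : p + v ∈ stairCells w) (h2 : p + (2 : ℤ) • v ∈ stairCells w)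
    (h3 : p + (3 : ℤ) • v ∈ stairCells w) : HasAbelianCube w := by
  obtain ⟨m0, hm0, e0⟩ := mem_stairCells.1 h0
  obtain ⟨m1, hm1, e1⟩ := mem_stairCells.1 h1
  obtain ⟨m2, hm2, e2⟩ := mem_stairCells.1 h2
  obtain ⟨m3, hm3, e3⟩ := mem_stairCells.1 h3
  have i0 := e0 ▸ stairPos_fst_add_snd hm0
  have i1 := e1 ▸ stairPos_fst_add_snd hm1
  have i2 := e2 ▸ stairPos_fst_add_snd hm2
  have i3 := e3 ▸ stairPos_fst_add_snd hm3
  simp only [Prod.fst_add, Prod.snd_add, Prod.smul_fst, Prod.smul_snd, smul_eq_mul] at i1 i2 i3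
  obtain ⟨k, hk⟩ : ∃ k : ℕ, (k : ℤ) = v.1 + v.2 := ⟨_, Int.toNat_of_nonneg hv.le⟩
  obtain rfl : m1 = m0 + k := by omega
  obtain rfl : m2 = m0 + k + k := by omega
  obtain rfl : m3 = m0 + k + k + k := by omega
  have b0 : stairPos (w.drop m0) k = v := stairPos_drop_eq_of_eq_add (by rw [e0, e1])
  have b1 : stairPos (w.drop (m0 + k)) k = v :=
    stairPos_drop_eq_of_eq_add (by rw [e1, e2]; module)
  have b2 : stairPos (w.drop (m0 + k + k)) k = v :=
    stairPos_drop_eq_of_eq_add (by rw [e2, e3]; module)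
  exact hasAbelianCube_iff_stairPos_drop.2
    ⟨m0, k, by omega, by omega, b0.trans b1.symm, b1.trans b2.symm⟩

theorem exists_progression_of_hasAbelianCube (h : HasAbelianCube w) :
    ∃ p v : ℤ × ℤ, v ≠ 0 ∧ p ∈ stairCells w ∧ p + v ∈ stairCells w ∧
      p + (2 : ℤ) • v ∈ stairCells w ∧ p + (3 : ℤ) • v ∈ stairCells w := by
  obtain ⟨i, k, hk, hlen, b01, b12⟩ := hasAbelianCube_iff_stairPos_drop.1 h
  have hv : stairPos (w.drop i) k ≠ 0 := by
    intro h0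
    have := stairPos_fst_add_snd (w := w.drop i) (i := k) (by simp; omega)
    simp [h0] at this
    omega
  refine ⟨stairPos w i, stairPos (w.drop i) k, hv, stairPos_mem_stairCells (by omega),
    ?_, ?_, ?_⟩
  · rw [← stairPos_add]
    exact stairPos_mem_stairCells (by omega)
  · convert stairPos_mem_stairCells (w := w) (m := i + k + k) (by omega) using 1
    rw [stairPos_add, stairPos_add, ← b01]
    module
  · convert stairPos_mem_stairCells (w := w) (m := i + k + k + k) (by omega) using 1
    rw [stairPos_add, stairPos_add, stairPos_add, ← b12, ← b01]
    module

end Staircase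

open Staircase in
theorem staircase_admissible_iff_abelianCubeFree (w : List Bool) :
    Admissible (stairCells w) ↔ ¬ HasAbelianCube w := by
  refine not_congr ⟨?_, exists_progression_of_hasAbelianCube⟩
  rintro ⟨p, v, hv, h0, h1, h2, h3⟩
  rcases lt_trichotomy 0 (v.1 + v.2) with hpos | hzero | hneg
  · exact hasAbelianCube_of_mem_stairCells hpos h0 h1 h2 h3
  · exact absurd (by simpa using eq_of_mem_stairCells_of_fst_add_snd_eq h1 h0 (by simp; omega)) hv
  · refine hasAbelianCube_of_mem_stairCells (p := p + (3 : ℤ) • v) (v := -v) (by simp; omega)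
      h3 ?_ ?_ ?_
    · convert h2 using 1; module
    · convert h1 using 1; module
    · convert h0 using 1; module
end
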